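/- arXiv:1004.1722 — 4 statements merged into one kernel-verified Lean document; each statement's English description precedes it below -/
import Mathlib

section
/- Let R be a (non-unital) commutative ring with R^{n+1} = {0} (all (n+1)-fold products vanish), let m ∈ ℤ and a, b ∈ R. If there is h ∈ R with a = b + m·h + b·h, then (a − b)·T_n(b) = m^n·h, where T_n(b) = Σ_{k=1}^{n} (-1)^{k-1} m^{n-k} b^{k-1}. -/
/-- Iterated multiplication: `mulPow x b j = x * b^j` in a non-unital ring. -/
def mulPow {R : Type*} [NonUnitalCommRing R] (x b : R) : ℕ → R
  | 0 => x
  | j + 1 => mulPow x b j * b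

lemma mulPow_add {R : Type*} [NonUnitalCommRing R] (x y b : R) (j : ℕ) :
    mulPow (x + y) b j = mulPow x b j + mulPow y b j := by
  induction j with
  | zero => rfl
  | succ j ih => simp [mulPow, ih, add_mul]

lemma mulPow_smul {R : Type*} [NonUnitalCommRing R] (c : ℤ) (x b : R) (j : ℕ) :
    mulPow (c • x) b j = c • mulPow x b j := by
  induction j with
  | zero => rfl
  | succ j ih => simp [mulPow, ih, smul_mul_assoc]

lemma mulPow_mul_left {R : Type*} [NonUnitalCommRing R] (x b : R) (j : ℕ) :
    mulPow (b * x) b j = mulPow x b (j + 1) := by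
  induction j with
  | zero => simp [mulPow, mul_comm]
  | succ j ih => simp [mulPow, ih]

lemma mulPow_eq_foldl {R : Type*} [NonUnitalCommRing R] (x b : R) (j : ℕ) :
    mulPow x b j = (List.replicate j b).foldl (· * ·) x := by
  induction j with
  | zero => rfl
  | succ j ih =>
    rw [List.replicate_succ', List.foldl_append]
    simp [mulPow, ih]

/-- In a commutative non-unital ring where every product of `n+1` elements
vanishes, if `a = b + m·h + b·h` then `(a-b)·T_n(b) = m^n·h`, where
`T_n(b) = ∑_{k=1}^n (-1)^{k-1} m^{n-k} b^{k-1}`. -/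
theorem stmt1 (R : Type*) [NonUnitalCommRing R] (n : ℕ) (hn : 1 ≤ n)
    (hnil : ∀ (x : R) (l : List R), l.length = n → l.foldl (· * ·) x = 0)
    (m : ℤ) (a b h : R) (hab : a = b + m • h + b * h) :
    ∑ k ∈ Finset.Icc 1 n, ((-1 : ℤ) ^ (k - 1) * m ^ (n - k)) • mulPow (a - b) b (k - 1)
      = (m ^ n) • h := by
  have hd : a - b = m • h + b * h := by rw [hab]; abel
  set G : ℕ → R := fun j => ((-1 : ℤ) ^ j * m ^ (n - j)) • mulPow h b j with hG
  have hgn : mulPow h b n = 0 := by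
    rw [mulPow_eq_foldl]
    exact hnil h _ (List.length_replicate (n := n) (a := b))
  have key : ∑ k ∈ Finset.Icc 1 n, ((-1 : ℤ) ^ (k - 1) * m ^ (n - k)) • mulPow (a - b) b (k - 1)
      = ∑ i ∈ Finset.range n, (G i - G (i + 1)) := by
    rw [← Finset.Ico_add_one_right_eq_Icc, Finset.sum_Ico_eq_sum_range]
    refine Finset.sum_congr rfl fun i hi => ?_
    have hi' : i < n := Finset.mem_range.mp hi
    have h1 : 1 + i - 1 = i := by omega
    rw [h1, hd, mulPow_add, mulPow_smul, mulPow_mul_left, smul_add, hG]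
    simp only
    rw [smul_smul]
    have e1 : (-1 : ℤ) ^ i * m ^ (n - (1 + i)) * m = (-1 : ℤ) ^ i * m ^ (n - i) := by
      rw [mul_assoc, ← pow_succ]
      congr 2
      omega
    have e2 : ((-1 : ℤ) ^ i * m ^ (n - (1 + i))) = -((-1 : ℤ) ^ (i + 1) * m ^ (n - (i + 1))) := by
      have hni : n - (1 + i) = n - (i + 1) := by omega
      rw [hni, pow_succ]
      ring
    rw [e1, e2, neg_smul, sub_eq_add_neg]
  rw [key, Finset.sum_range_sub' G n, hG]
  simp [hgn, mulPow]
end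

section
/- Let R be a commutative (possibly non-unital) ring such that any product of n+1 elements of R is zero, let m ∈ ℤ and a, b ∈ R. If (a − b)·T_n(b) = m^n·h for some h ∈ R, where T_n(b) = Σ_{k=1}^{n} (-1)^{k-1} m^{n-k} b^{k-1}, then m^n·(a − b − m·h − b·h) = 0. -/
namespace mulPow

variable {R : Type*} [NonUnitalCommRing R]

theorem succ_eq_mul (x b : R) (j : ℕ) : mulPow x b (j + 1) = b * mulPow x b j :=
  mul_comm _ _

theorem eq_foldl_replicate (x b : R) (j : ℕ) :
    mulPow x b j = (List.replicate j b).foldl (· * ·) x := by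
  induction j with
  | zero => rfl
  | succ j ih => rw [List.replicate_succ', List.foldl_concat, ← ih]; rfl

theorem smul_add_mul_alternating_sum (m : ℤ) (c b : R) (n : ℕ) :
    let S := ∑ k ∈ Finset.Icc 1 n, ((-1 : ℤ) ^ (k - 1) * m ^ (n - k)) • mulPow c b (k - 1)
    m • S + b * S = m ^ n • c - (-1 : ℤ) ^ n • mulPow c b n := by
  intro S
  let f : ℕ → R := fun i ↦ ((-1 : ℤ) ^ i * m ^ (n - i)) • mulPow c b i
  have hS : S = ∑ i ∈ Finset.range n, ((-1 : ℤ) ^ i * m ^ (n - (1 + i))) • mulPow c b i := by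
    simp only [S, ← Finset.Ico_add_one_right_eq_Icc, Finset.sum_Ico_eq_sum_range,
      Nat.add_sub_cancel, Nat.add_sub_cancel_left]
  have hterm : ∀ i ∈ Finset.range n,
      m • (((-1 : ℤ) ^ i * m ^ (n - (1 + i))) • mulPow c b i)
        + b * (((-1 : ℤ) ^ i * m ^ (n - (1 + i))) • mulPow c b i) = f i - f (i + 1) := by
    intro i hi
    obtain ⟨e, rfl⟩ := Nat.exists_eq_add_of_lt (Finset.mem_range.mp hi)
    have h₁ : i + e + 1 - (1 + i) = e := by omega
    have h₂ : i + e + 1 - i = e + 1 := by omega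
    have h₃ : i + e + 1 - (i + 1) = e := by omega
    simp only [f, h₁, h₂, h₃, mul_smul_comm, succ_eq_mul]
    module
  rw [hS, Finset.smul_sum, Finset.mul_sum, ← Finset.sum_add_distrib, Finset.sum_congr rfl hterm,
    Finset.sum_range_sub']
  simp [f, mulPow]

end mulPow

theorem stmt2_general (R : Type*) [NonUnitalCommRing R] (n : ℕ)
    (hnil : ∀ (x : R) (l : List R), l.length = n → l.foldl (· * ·) x = 0)
    (m : ℤ) (a b h : R)
    (hT : ∑ k ∈ Finset.Icc 1 n, ((-1 : ℤ) ^ (k - 1) * m ^ (n - k)) • mulPow (a - b) b (k - 1)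
      = (m ^ n) • h) :
    (m ^ n) • (a - b - m • h - b * h) = 0 := by
  have hvanish : mulPow (a - b) b n = 0 := by
    rw [mulPow.eq_foldl_replicate]
    exact hnil _ _ List.length_replicate
  have key := mulPow.smul_add_mul_alternating_sum m (a - b) b n
  rw [hT, hvanish, smul_zero, sub_zero] at key
  rw [smul_sub, smul_sub, smul_comm, ← mul_smul_comm, ← key]
  abel

/-- In a commutative non-unital ring where every product of `n+1` elements
vanishes, if `(a-b)·T_n(b) = m^n·h` for some `h`, with
`T_n(b) = ∑_{k=1}^n (-1)^{k-1} m^{n-k} b^{k-1}`, then `m^n·(a - b - m·h - b·h) = 0`. -/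
theorem stmt2 (R : Type*) [NonUnitalCommRing R] (n : ℕ) (hn : 1 ≤ n)
    (hnil : ∀ (x : R) (l : List R), l.length = n → l.foldl (· * ·) x = 0)
    (m : ℤ) (a b h : R)
    (hT : ∑ k ∈ Finset.Icc 1 n, ((-1 : ℤ) ^ (k - 1) * m ^ (n - k)) • mulPow (a - b) b (k - 1)
      = (m ^ n) • h) :
    (m ^ n) • (a - b - m • h - b * h) = 0 :=
  stmt2_general R n hnil m a b h hT
end

section
/- For positive integers n and nonnegative integers k_1, ..., k_n with k_1 + 2k_2 + ... + n·k_n = n, the rational number n!·(k_1 + ... + k_n − 1)! / (1!^{k_1} ··· n!^{k_n} · k_1! ··· k_n!) is an integer. -/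
/-!
Grouping the `k_i` blocks of size `i` shows that `i!^{k_i} · k_i!` divides `(i k_i)!`
(the quotient counts partitions of an `i k_i`-set into `k_i` blocks of size `i`), and a
product of factorials divides the factorial of the sum. Hence the denominator already
divides `n!`.
-/

open Finset Nat

theorem Nat.factorial_pow_mul_factorial_dvd_factorial_mul {m : ℕ} (hm : m ≠ 0) (k : ℕ) :
    m ! ^ k * k ! ∣ (m * k)! := by
  rw [mul_comm m k, ← uniformBell_mul_eq k hm, mul_assoc]
  exact Dvd.intro_left _ rfl

theorem Nat.prod_factorial_pow_mul_factorial_dvd_factorial_sum {s : Finset ℕ} (hs : 0 ∉ s)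
    (k : ℕ → ℕ) : ∏ i ∈ s, i ! ^ k i * (k i)! ∣ (∑ i ∈ s, i * k i)! :=
  calc ∏ i ∈ s, i ! ^ k i * (k i)!
      ∣ ∏ i ∈ s, (i * k i)! := prod_dvd_prod_of_dvd _ _ fun i hi ↦
        factorial_pow_mul_factorial_dvd_factorial_mul (ne_of_mem_of_not_mem hi hs) (k i)
    _ ∣ (∑ i ∈ s, i * k i)! := prod_factorial_dvd_factorial_sum s _

theorem stmt8_general (n : ℕ) (k : ℕ → ℕ)
    (hsum : ∑ i ∈ Finset.Icc 1 n, i * k i = n) :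
    (∏ i ∈ Finset.Icc 1 n, (Nat.factorial i) ^ (k i) * (k i).factorial)
      ∣ n.factorial * ((∑ i ∈ Finset.Icc 1 n, k i) - 1).factorial := by
  have hdvd := prod_factorial_pow_mul_factorial_dvd_factorial_sum (s := Icc 1 n) (by simp) k
  rw [hsum] at hdvd
  exact hdvd.mul_right _

/-- if `k_1 + 2k_2 + … + n·k_n = n` then
`n!·(k_1+…+k_n-1)! / (1!^{k_1}···n!^{k_n}·k_1!···k_n!)` is an integer, i.e. the
denominator divides the numerator. -/
theorem stmt8 (n : ℕ) (hn : 1 ≤ n) (k : ℕ → ℕ)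
    (hsum : ∑ i ∈ Finset.Icc 1 n, i * k i = n) :
    (∏ i ∈ Finset.Icc 1 n, (Nat.factorial i) ^ (k i) * (k i).factorial)
      ∣ n.factorial * ((∑ i ∈ Finset.Icc 1 n, k i) - 1).factorial :=
  stmt8_general n k hsum
end

section
/- Fix m ≥ 1 and n ≥ 1, let ℓ(n) = lcm(1,...,n) and p_n(x) = Σ_{k=1}^{n} (-1)^{k-1} (ℓ(n)/k) m^{n-k} x^k. Then there exist polynomials v_n ∈ ℤ[y] and s_{n+1} ∈ ℤ[x,y], where every monomial of s_{n+1} has total degree ≥ n+1, such that p_n(x + m·y + x·y) = p_n(x) + m^n·v_n(y) + s_{n+1}(x,y) in ℤ[x,y]. Moreover one may take v_n(y) = ℓ(n)·Σ_{k=1}^{n} (-1)^{k-1} y^k / k. -/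
open MvPolynomial

/-- `ℓ(n) = lcm(1,…,n)`. -/
def lcmN (n : ℕ) : ℕ := (Finset.Icc 1 n).lcm id

/-- `p_n(x) = ∑_{k=1}^n (-1)^{k-1} (ℓ(n)/k) m^{n-k} x^k ∈ ℤ[x]`. -/
noncomputable def pPoly (m : ℤ) (n : ℕ) : Polynomial ℤ :=
  ∑ k ∈ Finset.Icc 1 n,
    Polynomial.C ((-1 : ℤ) ^ (k - 1) * ((lcmN n / k : ℕ) : ℤ) * m ^ (n - k)) * Polynomial.X ^ k

/-- `v_n(y) = ℓ(n)·∑_{k=1}^n (-1)^{k-1} y^k / k ∈ ℤ[y]`. -/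
noncomputable def vPoly (n : ℕ) : Polynomial ℤ :=
  ∑ k ∈ Finset.Icc 1 n,
    Polynomial.C ((-1 : ℤ) ^ (k - 1) * ((lcmN n / k : ℕ) : ℤ)) * Polynomial.X ^ k

/-!
Up to the factor `ℓ(n)`, `p_n(x)` is `m^n` times the degree-`n` truncation of `log (1 + x/m)` and
`v_n(y)` that of `log (1 + y)`; since `m + (x + m y + x y) = (m + x)(1 + y)`, the remainder
`s = p_n(x + m y + x y) - p_n(x) - m^n v_n(y)` vanishes to order `n + 1`. Without logarithms:
`(m + t) p_n'(t) = ℓ(n) (m^n - (-t)^n)`, which makes both partial derivatives of `s` multiples of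
geometric sums `∑ a^i b^(n-1-i)` with `a, b` of order `1`, hence of order `n`; as `s` has no constant
term and `ℤ` is torsion-free, `s` itself has order `n + 1`.
-/

namespace MvPolynomial

variable (σ R : Type*) [CommSemiring R]

def degreeGEIdeal (n : ℕ) : Ideal (MvPolynomial σ R) where
  carrier := {p | ∀ d ∈ p.support, n ≤ d.degree}
  zero_mem' := by simp
  add_mem' {p q} hp hq d hd := by
    classical
    exact (Finset.mem_union.1 (support_add hd)).elim (hp d) (hq d)
  smul_mem' c p hp d hd := by
    classical
    obtain ⟨e, -, f, hf, rfl⟩ := Finset.mem_add.1 (support_mul c p hd)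
    rw [map_add]
    exact (hp f hf).trans (Nat.le_add_left _ _)

variable {σ R}

theorem mem_degreeGEIdeal {n : ℕ} {p : MvPolynomial σ R} :
    p ∈ degreeGEIdeal σ R n ↔ ∀ d ∈ p.support, n ≤ d.degree :=
  Iff.rfl

theorem degreeGEIdeal_zero : degreeGEIdeal σ R 0 = ⊤ :=
  eq_top_iff.2 fun _ _ => mem_degreeGEIdeal.2 fun _ _ => Nat.zero_le _

theorem mul_mem_degreeGEIdeal {a b : ℕ} {p q : MvPolynomial σ R}
    (hp : p ∈ degreeGEIdeal σ R a) (hq : q ∈ degreeGEIdeal σ R b) :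
    p * q ∈ degreeGEIdeal σ R (a + b) := by
  classical
  rw [mem_degreeGEIdeal] at *
  intro d hd
  obtain ⟨e, he, f, hf, rfl⟩ := Finset.mem_add.1 (support_mul p q hd)
  rw [map_add]
  exact Nat.add_le_add (hp e he) (hq f hf)

theorem pow_mem_degreeGEIdeal {p : MvPolynomial σ R} (hp : p ∈ degreeGEIdeal σ R 1) (k : ℕ) :
    p ^ k ∈ degreeGEIdeal σ R k := by
  induction k with
  | zero => simp [degreeGEIdeal_zero]
  | succ k ih => rw [pow_succ]; exact mul_mem_degreeGEIdeal ih hp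

theorem X_mem_degreeGEIdeal (i : σ) : (X i : MvPolynomial σ R) ∈ degreeGEIdeal σ R 1 := by
  intro d hd
  rw [Finset.mem_singleton.1 (support_monomial_subset hd), Finsupp.degree_single]

theorem geom_sum₂_mul_mem_degreeGEIdeal {a b c : MvPolynomial σ R} (ha : a ∈ degreeGEIdeal σ R 1)
    (hb : b ∈ degreeGEIdeal σ R 1) (hc : c ∈ degreeGEIdeal σ R 1) (n : ℕ) :
    (∑ i ∈ Finset.range n, a ^ i * b ^ (n - 1 - i)) * c ∈ degreeGEIdeal σ R n := by
  cases n with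
  | zero => simp [degreeGEIdeal_zero]
  | succ k =>
    refine mul_mem_degreeGEIdeal (Ideal.sum_mem _ fun i hi => ?_) hc
    simpa [Nat.add_sub_cancel' (Finset.mem_range_succ_iff.1 hi)] using
      mul_mem_degreeGEIdeal (pow_mem_degreeGEIdeal ha i) (pow_mem_degreeGEIdeal hb (k - i))

theorem mem_degreeGEIdeal_succ_of_pderiv_mem [IsAddTorsionFree R] {n : ℕ} {p : MvPolynomial σ R}
    (h0 : constantCoeff p = 0) (h : ∀ i, pderiv i p ∈ degreeGEIdeal σ R n) :
    p ∈ degreeGEIdeal σ R (n + 1) := by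
  classical
  rw [mem_degreeGEIdeal]
  intro d hd
  obtain ⟨i, hi⟩ : ∃ i, d i ≠ 0 := by
    by_contra! hd0
    rw [show d = 0 from Finsupp.ext hd0, mem_support_iff, ← constantCoeff_eq] at hd
    exact hd h0
  set e := d - Finsupp.single i 1
  have hde : e + Finsupp.single i 1 = d :=
    tsub_add_cancel_of_le (Finsupp.single_le_iff.2 (Nat.one_le_iff_ne_zero.2 hi))
  have he : e ∈ (pderiv i p).support := by
    rw [mem_support_iff, coeff_pderiv, hde, mul_comm, ← Nat.cast_succ, ← nsmul_eq_mul]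
    exact (nsmul_eq_zero_iff_right (Nat.succ_ne_zero _)).not.2 (mem_support_iff.1 hd)
  have := mem_degreeGEIdeal.1 (h i) e he
  rw [← hde, map_add, Finsupp.degree_single]
  omega

end MvPolynomial

section sPoly

variable (m : ℤ) (n : ℕ)

theorem pPoly_one : pPoly 1 n = vPoly n := by
  simp [pPoly, vPoly]

theorem derivative_pPoly :
    Polynomial.derivative (pPoly m n) = Polynomial.C (lcmN n : ℤ) *
      ∑ j ∈ Finset.range n, (-Polynomial.X) ^ j * Polynomial.C m ^ (n - 1 - j) := by
  have reindex (f : ℕ → Polynomial ℤ) :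
      ∑ k ∈ Finset.Icc 1 n, f k = ∑ j ∈ Finset.range n, f (j + 1) := by
    rw [Finset.range_eq_Ico, Finset.sum_Ico_add', ← Finset.Ico_add_one_right_eq_Icc]
  rw [pPoly, Polynomial.derivative_sum, Finset.mul_sum, reindex]
  refine Finset.sum_congr rfl fun j hj => ?_
  obtain ⟨q, hq⟩ : j + 1 ∣ lcmN n :=
    Finset.dvd_lcm (f := id) (Finset.mem_Icc.2 ⟨by omega, by simp at hj; omega⟩)
  rw [Polynomial.derivative_C_mul_X_pow, hq, Nat.mul_div_cancel_left _ j.succ_pos,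
    Nat.add_sub_cancel, show n - (j + 1) = n - 1 - j by omega]
  simp only [map_mul, map_pow, map_neg, map_one, map_natCast, neg_pow (Polynomial.X : Polynomial ℤ)]
  push_cast
  ring

theorem mul_aeval_derivative_pPoly {A : Type*} [CommRing A] [Algebra ℤ A] (t : A) :
    (algebraMap ℤ A m + t) * Polynomial.aeval t (Polynomial.derivative (pPoly m n)) =
      lcmN n * (algebraMap ℤ A m ^ n - (-t) ^ n) := by
  rw [derivative_pPoly]
  simp only [map_mul, map_sum, map_pow, map_neg, Polynomial.aeval_X, Polynomial.aeval_C, map_natCast]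
  linear_combination (-(lcmN n : A)) * geom_sum₂_mul (-t) (algebraMap ℤ A m) n

noncomputable def sPoly : MvPolynomial (Fin 2) ℤ :=
  Polynomial.aeval (X 0 + C m * X 1 + X 0 * X 1) (pPoly m n) - Polynomial.aeval (X 0) (pPoly m n)
    - C (m ^ n) * Polynomial.aeval (X 1) (vPoly n)

theorem constantCoeff_aeval_pPoly {σ : Type*} {t : MvPolynomial σ ℤ} (ht : constantCoeff t = 0) :
    constantCoeff (Polynomial.aeval t (pPoly m n)) = 0 := by
  simp only [pPoly, map_sum, map_mul, map_pow, Polynomial.aeval_X, ht]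
  exact Finset.sum_eq_zero fun k hk => by
    rw [zero_pow (by simp at hk; omega), mul_zero]

theorem constantCoeff_sPoly : constantCoeff (sPoly m n) = 0 := by
  simp [sPoly, ← pPoly_one, constantCoeff_aeval_pPoly]

theorem pderiv_zero_sPoly : pderiv 0 (sPoly m n) =
    (∑ i ∈ Finset.range n, (-X 0) ^ i * (-(X 0 + C m * X 1 + X 0 * X 1)) ^ (n - 1 - i)) *
      ((lcmN n : MvPolynomial (Fin 2) ℤ) * X 1) := by
  -- After multiplying by `m + x`, the identity follows from `(m + x)(1 + y) = m + U`,
  -- `U - x = (m + x) y` and `mul_aeval_derivative_pPoly`, where `U = x + m y + x y`.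
  have hne : (C m + X 0 : MvPolynomial (Fin 2) ℤ) ≠ 0 := fun h => by
    simpa using congrArg (pderiv 0) h
  refine mul_left_cancel₀ hne ?_
  have hU := mul_aeval_derivative_pPoly m n (X 0 + C m * X 1 + X 0 * X 1 : MvPolynomial (Fin 2) ℤ)
  have hx := mul_aeval_derivative_pPoly m n (X 0 : MvPolynomial (Fin 2) ℤ)
  rw [algebraMap_eq] at hU hx
  simp only [sPoly, map_sub, Derivation.map_aeval, map_add, pderiv_mul, pderiv_X, pderiv_C,
    smul_eq_mul, Pi.single_eq_same, Pi.single_eq_of_ne one_ne_zero]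
  linear_combination hU - hx - (lcmN n : MvPolynomial (Fin 2) ℤ) *
    geom_sum₂_mul (-X 0) (-(X 0 + C m * X 1 + X 0 * X 1 : MvPolynomial (Fin 2) ℤ)) n

theorem pderiv_one_sPoly : pderiv 1 (sPoly m n) =
    (∑ i ∈ Finset.range n, (-(C m * X 1)) ^ i * (-(X 0 + C m * X 1 + X 0 * X 1)) ^ (n - 1 - i)) *
      ((lcmN n : MvPolynomial (Fin 2) ℤ) * X 0) := by
  -- As for `pderiv_zero_sPoly`, after multiplying by `1 + y`, now with `U - m y = x (1 + y)`.
  have hne : (1 + X 1 : MvPolynomial (Fin 2) ℤ) ≠ 0 := fun h => by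
    simpa using congrArg constantCoeff h
  refine mul_left_cancel₀ hne ?_
  have hU := mul_aeval_derivative_pPoly m n (X 0 + C m * X 1 + X 0 * X 1 : MvPolynomial (Fin 2) ℤ)
  have hy := mul_aeval_derivative_pPoly 1 n (X 1 : MvPolynomial (Fin 2) ℤ)
  rw [algebraMap_eq] at hU
  rw [map_one] at hy
  simp only [sPoly, ← pPoly_one, map_sub, Derivation.map_aeval, map_add, pderiv_mul, pderiv_X,
    pderiv_C, smul_eq_mul, Pi.single_eq_same, Pi.single_eq_of_ne zero_ne_one]
  rw [C_pow]
  linear_combination hU - C m ^ n * hy - (lcmN n : MvPolynomial (Fin 2) ℤ) *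
    geom_sum₂_mul (-(C m * X 1)) (-(X 0 + C m * X 1 + X 0 * X 1 : MvPolynomial (Fin 2) ℤ)) n

theorem sPoly_mem_degreeGEIdeal : sPoly m n ∈ degreeGEIdeal (Fin 2) ℤ (n + 1) := by
  have hx := X_mem_degreeGEIdeal (R := ℤ) (0 : Fin 2)
  have hy := X_mem_degreeGEIdeal (R := ℤ) (1 : Fin 2)
  have hU : X 0 + C m * X 1 + X 0 * X 1 ∈ degreeGEIdeal (Fin 2) ℤ 1 :=
    add_mem (add_mem hx (Ideal.mul_mem_left _ _ hy)) (Ideal.mul_mem_right _ _ hx)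
  refine mem_degreeGEIdeal_succ_of_pderiv_mem (constantCoeff_sPoly m n)
    (Fin.forall_fin_two.2 ⟨?_, ?_⟩)
  · rw [pderiv_zero_sPoly]
    exact geom_sum₂_mul_mem_degreeGEIdeal (neg_mem hx) (neg_mem hU) (Ideal.mul_mem_left _ _ hy) n
  · rw [pderiv_one_sPoly]
    exact geom_sum₂_mul_mem_degreeGEIdeal (neg_mem (Ideal.mul_mem_left _ _ hy)) (neg_mem hU)
      (Ideal.mul_mem_left _ _ hx) n

end sPoly

theorem stmt11_general (m : ℤ) (n : ℕ) :
    ∃ s : MvPolynomial (Fin 2) ℤ,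
      (∀ d ∈ s.support, n + 1 ≤ d.sum fun _ e => e) ∧
      Polynomial.aeval (X 0 + C m * X 1 + X 0 * X 1 : MvPolynomial (Fin 2) ℤ) (pPoly m n)
        = Polynomial.aeval (X 0 : MvPolynomial (Fin 2) ℤ) (pPoly m n)
          + C (m ^ n) * Polynomial.aeval (X 1 : MvPolynomial (Fin 2) ℤ) (vPoly n)
          + s :=
  ⟨sPoly m n, sPoly_mem_degreeGEIdeal m n, by rw [sPoly]; ring⟩

/-- there is `s_{n+1} ∈ ℤ[x,y]`, all of whose monomials have total degree
`≥ n+1`, such that `p_n(x + m·y + x·y) = p_n(x) + m^n·v_n(y) + s_{n+1}(x,y)`, where one may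
take `v_n(y) = ℓ(n)·∑_{k=1}^n (-1)^{k-1} y^k/k`. -/
theorem stmt11 (m : ℤ) (hm : 1 ≤ m) (n : ℕ) (hn : 1 ≤ n) :
    ∃ s : MvPolynomial (Fin 2) ℤ,
      (∀ d ∈ s.support, n + 1 ≤ d.sum fun _ e => e) ∧
      Polynomial.aeval (X 0 + C m * X 1 + X 0 * X 1 : MvPolynomial (Fin 2) ℤ) (pPoly m n)
        = Polynomial.aeval (X 0 : MvPolynomial (Fin 2) ℤ) (pPoly m n)
          + C (m ^ n) * Polynomial.aeval (X 1 : MvPolynomial (Fin 2) ℤ) (vPoly n)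
          + s :=
  stmt11_general m n
end
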